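/- Let μ = (√6+√2)/2, α = [[μ,0],[0,μ⁻¹]] and β = [[√2,1],[1,√2]], regarded as matrices in SL(2,ℝ). Then the commutator α·β·α⁻¹·β⁻¹ squares to minus the identity: (α·β·α⁻¹·β⁻¹)² = −I. (This realizes the presentation ⟨α, β : (αβα⁻¹β⁻¹)² = −1⟩ of the arithmetic Fuchsian group of signature (1;2) labeled e2d1D6ii.) -/
import Mathlib


noncomputable def mu : ℝ := (Real.sqrt 6 + Real.sqrt 2) / 2

noncomputable def alphaM : Matrix (Fin 2) (Fin 2) ℝ := !![mu, 0; 0, mu⁻¹]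

noncomputable def betaM : Matrix (Fin 2) (Fin 2) ℝ := !![Real.sqrt 2, 1; 1, Real.sqrt 2]

lemma sqrt2_sq : Real.sqrt 2 * Real.sqrt 2 = 2 := Real.mul_self_sqrt (by norm_num)
lemma sqrt6_sq : Real.sqrt 6 * Real.sqrt 6 = 6 := Real.mul_self_sqrt (by norm_num)
lemma sqrt2_pos : 0 < Real.sqrt 2 := Real.sqrt_pos.mpr (by norm_num)
lemma sqrt6_pos : 0 < Real.sqrt 6 := Real.sqrt_pos.mpr (by norm_num)

lemma mu_pos : 0 < mu := by
  unfold mu; positivity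

lemma alphaM_inv : alphaM⁻¹ = !![mu⁻¹, 0; 0, mu] := by
  apply Matrix.inv_eq_right_inv
  simp [alphaM, Matrix.mul_fin_two, mul_inv_cancel₀ mu_pos.ne', inv_mul_cancel₀ mu_pos.ne',
    Matrix.one_fin_two]

lemma betaM_inv : betaM⁻¹ = !![Real.sqrt 2, -1; -1, Real.sqrt 2] := by
  apply Matrix.inv_eq_right_inv
  simp [betaM, Matrix.mul_fin_two, sqrt2_sq, Matrix.one_fin_two]
  norm_num [sqrt2_sq]

/-- The commutator `αβα⁻¹β⁻¹` squares to minus the identity, realizing the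
presentation `⟨α, β : (αβα⁻¹β⁻¹)² = -1⟩` of the arithmetic Fuchsian group of
signature (1;2) labeled e2d1D6ii. -/
theorem commutator_sq_eq_neg_one :
    (alphaM * betaM * alphaM⁻¹ * betaM⁻¹) ^ 2 = -(1 : Matrix (Fin 2) (Fin 2) ℝ) := by
  have h26 : Real.sqrt 2 * Real.sqrt 6 = Real.sqrt 12 := by
    rw [← Real.sqrt_mul (by norm_num)]; norm_num
  have h12 : Real.sqrt 12 * Real.sqrt 12 = 12 := Real.mul_self_sqrt (by norm_num)
  have hmu : mu⁻¹ = (Real.sqrt 6 - Real.sqrt 2) / 2 := by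
    refine (eq_inv_of_mul_eq_one_left ?_).symm
    unfold mu
    nlinarith [sqrt2_sq, sqrt6_sq]
  rw [alphaM_inv, betaM_inv, pow_two]
  unfold alphaM betaM
  rw [hmu, show mu = (Real.sqrt 6 + Real.sqrt 2) / 2 from rfl]
  simp only [Matrix.mul_fin_two]
  set a := Real.sqrt 2 with ha'
  set b := Real.sqrt 6 with hb'
  have ha : a * a = 2 := sqrt2_sq
  have hb : b * b = 6 := sqrt6_sq
  ext i j
  fin_cases i <;> fin_cases j <;> simp only [Matrix.cons_val', Matrix.cons_val_zero,
    Matrix.cons_val_one, Matrix.head_cons, Matrix.head_fin_const, Matrix.empty_val',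
    Matrix.cons_val_fin_one, Matrix.neg_apply, Matrix.one_apply_eq, Matrix.one_apply_ne,
    Matrix.of_apply, Fin.mk_zero, Fin.mk_one, ne_eq, not_false_eq_true,
    neg_zero, Matrix.one_fin_two]
  · linear_combination ((17/8 : ℝ) + (-5/8 : ℝ) * b * b + (3/4 : ℝ) * a * b + (-1/4 : ℝ) * a * b * b * b + (17/16 : ℝ) * a * a + (-1/2 : ℝ) * a * a * b * b + (1/16 : ℝ) * a * a * b * b * b * b + (1/4 : ℝ) * a * a * a * b + (1/2 : ℝ) * a * a * a * a + (-1/8 : ℝ) * a * a * a * a * b * b + (1/16 : ℝ) * a * a * a * a * a * a) * ha + ((-7/8 : ℝ) + (1/16 : ℝ) * b * b + (-1/4 : ℝ) * a * b) * hb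
  · linear_combination ((-3/2 : ℝ) * b + (1/4 : ℝ) * b * b * b + (-3/2 : ℝ) * a + (1/4 : ℝ) * a * b * b + (-3/4 : ℝ) * a * a * b + (1/4 : ℝ) * a * a * b * b * b + (-3/4 : ℝ) * a * a * a + (1/4 : ℝ) * a * a * a * b * b + (-1/4 : ℝ) * a * a * a * a * b + (-1/4 : ℝ) * a * a * a * a * a) * ha + ((1/2 : ℝ) * b + (1/2 : ℝ) * a) * hb
  · linear_combination ((3/2 : ℝ) * b + (-1/4 : ℝ) * b * b * b + (-3/2 : ℝ) * a + (1/4 : ℝ) * a * b * b + (3/4 : ℝ) * a * a * b + (-1/4 : ℝ) * a * a * b * b * b + (-3/4 : ℝ) * a * a * a + (1/4 : ℝ) * a * a * a * b * b + (1/4 : ℝ) * a * a * a * a * b + (-1/4 : ℝ) * a * a * a * a * a) * ha + ((-1/2 : ℝ) * b + (1/2 : ℝ) * a) * hb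
  · linear_combination ((17/8 : ℝ) + (-5/8 : ℝ) * b * b + (-3/4 : ℝ) * a * b + (1/4 : ℝ) * a * b * b * b + (17/16 : ℝ) * a * a + (-1/2 : ℝ) * a * a * b * b + (1/16 : ℝ) * a * a * b * b * b * b + (-1/4 : ℝ) * a * a * a * b + (1/2 : ℝ) * a * a * a * a + (-1/8 : ℝ) * a * a * a * a * b * b + (1/16 : ℝ) * a * a * a * a * a * a) * ha + ((-7/8 : ℝ) + (1/16 : ℝ) * b * b + (1/4 : ℝ) * a * b) * hb
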